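/- Let G ∈ ℂ^{n×n} be Hermitian positive semidefinite and define the power-method-like iteration s^{(t+1)} = exp(i · arg(G s^{(t)})) entrywise (with the convention that an entry with G s^{(t)} having zero value keeps its previous phase, or maps to 1). Then the objective values sᴴ G s are monotonically nondecreasing along the iterations: (s^{(t+1)})ᴴ G s^{(t+1)} ≥ (s^{(t)})ᴴ G s^{(t)} for all t, provided all entries of G s^{(t)} are nonzero. -/

import Mathlib

open Matrix
open scoped ComplexOrder

/-! With `y = G s` and `t` the phase vector of `y`, the sum `tᴴ y = ∑ |yᵢ|` dominates `Re (sᴴ y)`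
for every `s` with entries in the unit disc. Positivity of `(t - s)ᴴ G (t - s)` gives
`2 Re (tᴴ G s) ≤ tᴴ G t + sᴴ G s`, hence `sᴴ G s ≤ 2 ∑ |yᵢ| - sᴴ G s ≤ tᴴ G t`. -/

theorem Matrix.PosSemidef.two_mul_re_dotProduct_mulVec_le {ι 𝕜 : Type*} [Fintype ι] [RCLike 𝕜]
    {G : Matrix ι ι 𝕜} (hG : G.PosSemidef) (s t : ι → 𝕜) :
    2 * RCLike.re (star t ⬝ᵥ G *ᵥ s) ≤
      RCLike.re (star t ⬝ᵥ G *ᵥ t) + RCLike.re (star s ⬝ᵥ G *ᵥ s) := by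
  have hswap : star s ⬝ᵥ G *ᵥ t = star (star t ⬝ᵥ G *ᵥ s) := by
    rw [star_dotProduct, star_mulVec, hG.1, ← dotProduct_mulVec]
  have hdiff := hG.re_dotProduct_nonneg (t - s)
  simp only [mulVec_sub, star_sub, sub_dotProduct, dotProduct_sub, map_sub, hswap,
    RCLike.star_def, RCLike.conj_re] at hdiff
  linarith

theorem Complex.star_exp_I_mul_arg_mul_self (z : ℂ) :
    star (Complex.exp (Complex.I * z.arg)) * z = ‖z‖ := by
  nth_rewrite 2 [← Complex.norm_mul_exp_arg_mul_I z]
  rw [mul_comm Complex.I, mul_left_comm, Complex.star_def, ← Complex.normSq_eq_conj_mul_self,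
    Complex.normSq_eq_norm_sq, Complex.norm_exp_ofReal_mul_I]
  simp

theorem star_exp_I_mul_arg_dotProduct_self {ι : Type*} [Fintype ι] (y : ι → ℂ) :
    star (fun i => Complex.exp (Complex.I * (y i).arg)) ⬝ᵥ y = ((∑ i, ‖y i‖ : ℝ) : ℂ) := by
  simp only [dotProduct, Pi.star_apply, Complex.star_exp_I_mul_arg_mul_self, Complex.ofReal_sum]

theorem re_star_dotProduct_le_sum_norm {ι : Type*} [Fintype ι] {s : ι → ℂ}
    (hs : ∀ i, ‖s i‖ ≤ 1) (y : ι → ℂ) : (star s ⬝ᵥ y).re ≤ ∑ i, ‖y i‖ := by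
  rw [dotProduct, Complex.re_sum]
  refine Finset.sum_le_sum fun i _ => (Complex.re_le_norm _).trans ?_
  rw [norm_mul, Pi.star_apply, norm_star]
  exact mul_le_of_le_one_left (norm_nonneg _) (hs i)

theorem stmt_3_general (n : ℕ) (G : Matrix (Fin n) (Fin n) ℂ) (hG : G.PosSemidef)
    (s : Fin n → ℂ) (hs : ∀ i, ‖s i‖ = 1) :
    (star s ⬝ᵥ G.mulVec s).re ≤
      (star (fun i => Complex.exp (Complex.I * ((G.mulVec s i).arg : ℂ))) ⬝ᵥ
        G.mulVec (fun i => Complex.exp (Complex.I * ((G.mulVec s i).arg : ℂ)))).re := by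
  set t := fun i => Complex.exp (Complex.I * ((G.mulVec s i).arg : ℂ))
  have hgain : (star t ⬝ᵥ G *ᵥ s).re = ∑ i, ‖(G *ᵥ s) i‖ := by
    rw [star_exp_I_mul_arg_dotProduct_self, Complex.ofReal_re]
  have hbound := re_star_dotProduct_le_sum_norm (fun i => (hs i).le) (G *ᵥ s)
  have hquad := hG.two_mul_re_dotProduct_mulVec_le s t
  simp only [RCLike.re_to_complex] at hquad
  linarith

/-- the power-method-like iteration `s ↦ exp(i·arg(G s))` (entrywise)
monotonically increases the quadratic form for a PSD matrix `G`, provided all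
entries of `G s` are nonzero. -/
theorem stmt_3 (n : ℕ) (G : Matrix (Fin n) (Fin n) ℂ) (hG : G.PosSemidef)
    (s : Fin n → ℂ) (hs : ∀ i, ‖s i‖ = 1)
    (hnz : ∀ i, G.mulVec s i ≠ 0) :
    (star s ⬝ᵥ G.mulVec s).re ≤
      (star (fun i => Complex.exp (Complex.I * ((G.mulVec s i).arg : ℂ))) ⬝ᵥ
        G.mulVec (fun i => Complex.exp (Complex.I * ((G.mulVec s i).arg : ℂ)))).re :=
  stmt_3_general n G hG s hs
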